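/- Let x_{j,k}, y_{j,k} : ℝ → ℝ (for integers j, k) be differentiable functions of t, with derivatives ẋ_{j,k}, ẏ_{j,k}. Define the half-point mesh speeds ẋ_{j−1/2,k} := (1/8)[ẋ_{j,k−1}+ẋ_{j−1,k−1}+2ẋ_{j,k}+2ẋ_{j−1,k}+ẋ_{j,k+1}+ẋ_{j−1,k+1}], ẋ_{j,k−1/2} := (1/8)[ẋ_{j−1,k}+ẋ_{j−1,k−1}+2ẋ_{j,k}+2ẋ_{j,k−1}+ẋ_{j+1,k}+ẋ_{j+1,k−1}], and similarly ẏ_{j−1/2,k}, ẏ_{j,k−1/2}; define the half-point metric terms X_{j−1/2,k} := (1/4)[y_{j,k+1}−y_{j,k−1}+y_{j−1,k+1}−y_{j−1,k−1}], Y_{j−1/2,k} := −(1/4)[x_{j,k+1}−x_{j,k−1}+x_{j−1,k+1}−x_{j−1,k−1}], Ξ_{j,k−1/2} := −(1/4)[y_{j+1,k}−y_{j−1,k}+y_{j+1,k−1}−y_{j−1,k−1}], Υ_{j,k−1/2} := (1/4)[x_{j+1,k}−x_{j−1,k}+x_{j+1,k−1}−x_{j−1,k−1}]; and define J_{j,k}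 := (1/4)[X_{j+1/2,k}+X_{j−1/2,k}][Υ_{j,k+1/2}+Υ_{j,k−1/2}] − (1/4)[Y_{j+1/2,k}+Y_{j−1/2,k}][Ξ_{j,k+1/2}+Ξ_{j,k−1/2}]. Then for every j, k and every t, d/dt J_{j,k} = X_{j+1/2,k}ẋ_{j+1/2,k} − X_{j−1/2,k}ẋ_{j−1/2,k} + Y_{j+1/2,k}ẏ_{j+1/2,k} − Y_{j−1/2,k}ẏ_{j−1/2,k} + Ξ_{j,k+1/2}ẋ_{j,k+1/2} − Ξ_{j,k−1/2}ẋ_{j,k−1/2} + Υ_{j,k+1/2}ẏ_{j,k+1/2} − Υ_{j,k−1/2}ẏ_{j,k−1/2}. -/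

import Mathlib

/-!
The metric terms are linear in the mesh positions, so `J_{j,k}` is a quadratic form in the
positions at the nine nodes of the 3×3 stencil around `(j, k)` and the product rule gives its
time derivative. The 1-2-1 averaging weights of the half-point speeds make this derivative
regroup into the flux differences on the right: an identity of polynomials in
the stencil values.
-/

/-- Half-point mesh speed `ẇ_{j-1/2,k}` built from the nodal speed field `w`:
`(1/8)[w_{j,k-1}+w_{j-1,k-1}+2w_{j,k}+2w_{j-1,k}+w_{j,k+1}+w_{j-1,k+1}]`. -/
noncomputable def speedH (w : ℤ → ℤ → ℝ → ℝ) (j k : ℤ) (t : ℝ) : ℝ :=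
  (1 / 8) * (w j (k - 1) t + w (j - 1) (k - 1) t + 2 * w j k t + 2 * w (j - 1) k t
    + w j (k + 1) t + w (j - 1) (k + 1) t)

/-- Half-point mesh speed `ẇ_{j,k-1/2}` built from the nodal speed field `w`:
`(1/8)[w_{j-1,k}+w_{j-1,k-1}+2w_{j,k}+2w_{j,k-1}+w_{j+1,k}+w_{j+1,k-1}]`. -/
noncomputable def speedV (w : ℤ → ℤ → ℝ → ℝ) (j k : ℤ) (t : ℝ) : ℝ :=
  (1 / 8) * (w (j - 1) k t + w (j - 1) (k - 1) t + 2 * w j k t + 2 * w j (k - 1) t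
    + w (j + 1) k t + w (j + 1) (k - 1) t)

/-- Metric term `X_{j-1/2,k} = (Jξ_x)_{j-1/2,k} = (1/4)[y_{j,k+1}-y_{j,k-1}+y_{j-1,k+1}-y_{j-1,k-1}]`. -/
noncomputable def metX (y : ℤ → ℤ → ℝ → ℝ) (j k : ℤ) (t : ℝ) : ℝ :=
  (1 / 4) * (y j (k + 1) t - y j (k - 1) t + y (j - 1) (k + 1) t - y (j - 1) (k - 1) t)

/-- Metric term `Y_{j-1/2,k} = (Jξ_y)_{j-1/2,k} = -(1/4)[x_{j,k+1}-x_{j,k-1}+x_{j-1,k+1}-x_{j-1,k-1}]`. -/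
noncomputable def metY (x : ℤ → ℤ → ℝ → ℝ) (j k : ℤ) (t : ℝ) : ℝ :=
  -(1 / 4) * (x j (k + 1) t - x j (k - 1) t + x (j - 1) (k + 1) t - x (j - 1) (k - 1) t)

/-- Metric term `Ξ_{j,k-1/2} = (Jη_x)_{j,k-1/2} = -(1/4)[y_{j+1,k}-y_{j-1,k}+y_{j+1,k-1}-y_{j-1,k-1}]`. -/
noncomputable def metXi (y : ℤ → ℤ → ℝ → ℝ) (j k : ℤ) (t : ℝ) : ℝ :=
  -(1 / 4) * (y (j + 1) k t - y (j - 1) k t + y (j + 1) (k - 1) t - y (j - 1) (k - 1) t)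

/-- Metric term `Υ_{j,k-1/2} = (Jη_y)_{j,k-1/2} = (1/4)[x_{j+1,k}-x_{j-1,k}+x_{j+1,k-1}-x_{j-1,k-1}]`. -/
noncomputable def metUpsilon (x : ℤ → ℤ → ℝ → ℝ) (j k : ℤ) (t : ℝ) : ℝ :=
  (1 / 4) * (x (j + 1) k t - x (j - 1) k t + x (j + 1) (k - 1) t - x (j - 1) (k - 1) t)

/-- Nodal Jacobian approximation
`J_{j,k} = (1/4)[X_{j+1/2,k}+X_{j-1/2,k}][Υ_{j,k+1/2}+Υ_{j,k-1/2}]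
         - (1/4)[Y_{j+1/2,k}+Y_{j-1/2,k}][Ξ_{j,k+1/2}+Ξ_{j,k-1/2}]`. -/
noncomputable def jacNode (x y : ℤ → ℤ → ℝ → ℝ) (j k : ℤ) (t : ℝ) : ℝ :=
  (1 / 4) * (metX y (j + 1) k t + metX y j k t)
      * (metUpsilon x j (k + 1) t + metUpsilon x j k t)
    - (1 / 4) * (metY x (j + 1) k t + metY x j k t)
      * (metXi y j (k + 1) t + metXi y j k t)

section MetricDerivatives

variable {x y xd yd : ℤ → ℤ → ℝ → ℝ}

lemma hasDerivAt_metX (hy : ∀ j k t, HasDerivAt (y j k) (yd j k t) t) (j k : ℤ) (t : ℝ) :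
    HasDerivAt (fun s => metX y j k s) (metX yd j k t) t :=
  ((((hy j (k + 1) t).sub (hy j (k - 1) t)).add (hy (j - 1) (k + 1) t)).sub
    (hy (j - 1) (k - 1) t)).const_mul _

lemma hasDerivAt_metY (hx : ∀ j k t, HasDerivAt (x j k) (xd j k t) t) (j k : ℤ) (t : ℝ) :
    HasDerivAt (fun s => metY x j k s) (metY xd j k t) t :=
  ((((hx j (k + 1) t).sub (hx j (k - 1) t)).add (hx (j - 1) (k + 1) t)).sub
    (hx (j - 1) (k - 1) t)).const_mul _

lemma hasDerivAt_metXi (hy : ∀ j k t, HasDerivAt (y j k) (yd j k t) t) (j k : ℤ) (t : ℝ) :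
    HasDerivAt (fun s => metXi y j k s) (metXi yd j k t) t :=
  ((((hy (j + 1) k t).sub (hy (j - 1) k t)).add (hy (j + 1) (k - 1) t)).sub
    (hy (j - 1) (k - 1) t)).const_mul _

lemma hasDerivAt_metUpsilon (hx : ∀ j k t, HasDerivAt (x j k) (xd j k t) t) (j k : ℤ) (t : ℝ) :
    HasDerivAt (fun s => metUpsilon x j k s) (metUpsilon xd j k t) t :=
  ((((hx (j + 1) k t).sub (hx (j - 1) k t)).add (hx (j + 1) (k - 1) t)).sub
    (hx (j - 1) (k - 1) t)).const_mul _

lemma hasDerivAt_jacNode (hx : ∀ j k t, HasDerivAt (x j k) (xd j k t) t)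
    (hy : ∀ j k t, HasDerivAt (y j k) (yd j k t) t) (j k : ℤ) (t : ℝ) :
    HasDerivAt (fun s => jacNode x y j k s)
      ((1 / 4) * (metX yd (j + 1) k t + metX yd j k t)
          * (metUpsilon x j (k + 1) t + metUpsilon x j k t)
        + (1 / 4) * (metX y (j + 1) k t + metX y j k t)
          * (metUpsilon xd j (k + 1) t + metUpsilon xd j k t)
        - ((1 / 4) * (metY xd (j + 1) k t + metY xd j k t)
            * (metXi y j (k + 1) t + metXi y j k t)
          + (1 / 4) * (metY x (j + 1) k t + metY x j k t)
            * (metXi yd j (k + 1) t + metXi yd j k t))) t := by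
  have hX := ((hasDerivAt_metX hy (j + 1) k t).add (hasDerivAt_metX hy j k t)).const_mul
    (1 / 4 : ℝ)
  have hUpsilon := (hasDerivAt_metUpsilon hx j (k + 1) t).add (hasDerivAt_metUpsilon hx j k t)
  have hY := ((hasDerivAt_metY hx (j + 1) k t).add (hasDerivAt_metY hx j k t)).const_mul
    (1 / 4 : ℝ)
  have hXi := (hasDerivAt_metXi hy j (k + 1) t).add (hasDerivAt_metXi hy j k t)
  exact (hX.mul hUpsilon).sub (hY.mul hXi)

end MetricDerivatives

lemma jacNode_product_rule_eq_flux_sum (x y xd yd : ℤ → ℤ → ℝ → ℝ) (j k : ℤ) (t : ℝ) :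
    (1 / 4) * (metX yd (j + 1) k t + metX yd j k t)
          * (metUpsilon x j (k + 1) t + metUpsilon x j k t)
        + (1 / 4) * (metX y (j + 1) k t + metX y j k t)
          * (metUpsilon xd j (k + 1) t + metUpsilon xd j k t)
        - ((1 / 4) * (metY xd (j + 1) k t + metY xd j k t)
            * (metXi y j (k + 1) t + metXi y j k t)
          + (1 / 4) * (metY x (j + 1) k t + metY x j k t)
            * (metXi yd j (k + 1) t + metXi yd j k t))
      = metX y (j + 1) k t * speedH xd (j + 1) k t - metX y j k t * speedH xd j k t
          + metY x (j + 1) k t * speedH yd (j + 1) k t - metY x j k t * speedH yd j k t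
          + metXi y j (k + 1) t * speedV xd j (k + 1) t - metXi y j k t * speedV xd j k t
          + metUpsilon x j (k + 1) t * speedV yd j (k + 1) t
          - metUpsilon x j k t * speedV yd j k t := by
  simp only [metX, metY, metXi, metUpsilon, speedH, speedV, add_sub_cancel_right]
  ring

theorem discrete_gcl_automatic
    (x y xd yd : ℤ → ℤ → ℝ → ℝ)
    (hx : ∀ (j k : ℤ) (t : ℝ), HasDerivAt (x j k) (xd j k t) t)
    (hy : ∀ (j k : ℤ) (t : ℝ), HasDerivAt (y j k) (yd j k t) t) :
    ∀ (j k : ℤ) (t : ℝ),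
      HasDerivAt (fun s => jacNode x y j k s)
        (metX y (j + 1) k t * speedH xd (j + 1) k t - metX y j k t * speedH xd j k t
          + metY x (j + 1) k t * speedH yd (j + 1) k t - metY x j k t * speedH yd j k t
          + metXi y j (k + 1) t * speedV xd j (k + 1) t - metXi y j k t * speedV xd j k t
          + metUpsilon x j (k + 1) t * speedV yd j (k + 1) t
          - metUpsilon x j k t * speedV yd j k t) t := by
  intro j k t
  exact (hasDerivAt_jacNode hx hy j k t).congr_deriv
    (jacNode_product_rule_eq_flux_sum x y xd yd j k t)
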